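/- Let p be a real number. Define f : S → ℝ by f(x) = p^{ℓ(x)}, let h : S → ℝ be its Möbius transform, h(x) = Σ_{X ⊆ Σ with x·Δ̂(X) ∈ S} (−1)^{|X|} p^{ℓ(x·Δ̂(X))}, and define g : S → ℝ by g(x) = Σ_{y ∈ S with x → y} h(y). Then h(x) = p^{ℓ(x)}·g(x) for every x ∈ S. -/

import Mathlib

open scoped Classical

namespace BraidMeasure

/-- Defining relations of the positive braid monoid on `n` strands,
with Artin generators indexed by `Fin (n - 1)`. -/
inductive BraidRel (n : ℕ) :
    FreeMonoid (Fin (n - 1)) → FreeMonoid (Fin (n - 1)) → Prop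
  | comm (i j : Fin (n - 1)) (h : (i : ℕ) + 2 ≤ (j : ℕ)) :
      BraidRel n (FreeMonoid.of i * FreeMonoid.of j)
        (FreeMonoid.of j * FreeMonoid.of i)
  | braid (i j : Fin (n - 1)) (h : (i : ℕ) + 1 = (j : ℕ)) :
      BraidRel n (FreeMonoid.of i * FreeMonoid.of j * FreeMonoid.of i)
        (FreeMonoid.of j * FreeMonoid.of i * FreeMonoid.of j)

/-- The positive braid monoid `Br_n`, presented by the Artin relations. -/
def BraidMonoid (n : ℕ) : Type := (conGen (BraidRel n)).Quotient

instance (n : ℕ) : Monoid (BraidMonoid n) :=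
  inferInstanceAs (Monoid (conGen (BraidRel n)).Quotient)

/-- The Artin generator `σ_{i+1}` of `Br_n`. -/
def gen {n : ℕ} (i : Fin (n - 1)) : BraidMonoid n :=
  (conGen (BraidRel n)).mk' (FreeMonoid.of i)

/-- Left divisibility: `x ≤_l y` iff `∃ z, y = x * z`. -/
def ldvd {n : ℕ} (x y : BraidMonoid n) : Prop := ∃ z, y = x * z

/-- Right divisibility: `x ≤_r y` iff `∃ z, y = z * x`. -/
def rdvd {n : ℕ} (x y : BraidMonoid n) : Prop := ∃ z, y = z * x

/-- `σ_{i+1}` for a natural number index, with junk value `1` out of range. -/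
def gen' {n : ℕ} (i : ℕ) : BraidMonoid n :=
  if h : i < n - 1 then gen ⟨i, h⟩ else 1

/-- The Garside element `Δ_n = (σ_1 ⋯ σ_{n-1})(σ_1 ⋯ σ_{n-2}) ⋯ (σ_1 σ_2) σ_1`. -/
def garside (n : ℕ) : BraidMonoid n :=
  ((List.range (n - 1)).map fun j =>
    ((List.range (n - 1 - j)).map fun i => (gen' i : BraidMonoid n)).prod).prod

/-- The set of simple braids: left divisors of `Δ_n`. -/
def Simples (n : ℕ) : Set (BraidMonoid n) := {x | ldvd x (garside n)}

/-- `L(y) = {σ_i : σ_i ≤_l y}` (as a set of indices). -/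
def Lset {n : ℕ} (y : BraidMonoid n) : Set (Fin (n - 1)) := {i | ldvd (gen i) y}

/-- `R(x) = {σ_i : x · σ_i ∉ S}` (as a set of indices). -/
def Rset {n : ℕ} (x : BraidMonoid n) : Set (Fin (n - 1)) :=
  {i | x * gen i ∉ Simples n}

/-- The relation `x → y` between simple braids: `L(y) ⊆ R(x)`. -/
def Arrow {n : ℕ} (x y : BraidMonoid n) : Prop := Lset y ⊆ Rset x

/-- The Möbius polynomial of the positive braid monoid:
`H_0 = H_1 = 1`, `H_n = ∑_{k=1}^{n} (-1)^{k+1} t^{k(k-1)/2} H_{n-k}`. -/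
noncomputable def mobiusH : ℕ → Polynomial ℤ
  | 0 => 1
  | 1 => 1
  | (n + 2) =>
      ∑ j ∈ Finset.range (n + 2),
        (-1 : Polynomial ℤ) ^ j * Polynomial.X ^ ((j + 1) * j / 2) * mobiusH (n + 1 - j)
  termination_by n => n
  decreasing_by omega

/-!
Garside's key lemma (if `σ_i x = σ_j y`, then `x` and `y` both factor through the completions
of `σ_i` and `σ_j` to their lcm) makes `Br_n` cancellative. It is proved by induction on the
length and on the number of braid moves relating `σ_i x` to `σ_j y`; the real work is in the
configurations of three generators.

Given cancellativity, for `x ∈ S` one has `x·Δ̂(X) ∈ S` iff `x·σ_i ∈ S` for all `σ_i ∈ X`,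
which pulls the factor `p^{ℓ(x)}` out of `h(x)`. On the other side, inclusion–exclusion writes
the indicator of `x → y` as an alternating sum over the `X ⊆ Σ \ R(x)` with `Δ̂(X) ≤_l y`, and
Möbius inversion on the simple braids, `∑_{y ∈ S, z ≤_l y} h(y) = p^{ℓ(z)}`, turns `g(x)` into
the same alternating sum.
-/

lemma sum_powerset_ite_subset_neg_one_pow {ι R : Type*} [DecidableEq ι] [CommRing R]
    (B L : Finset ι) :
    ∑ X ∈ B.powerset, (if X ⊆ L then (-1 : R) ^ X.card else 0) =
      if Disjoint B L then 1 else 0 := by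
  have hfilter : B.powerset.filter (· ⊆ L) = (B ∩ L).powerset := by
    ext X; simp only [Finset.mem_filter, Finset.mem_powerset, Finset.subset_inter_iff]
  simp only [← Finset.sum_filter, hfilter, Finset.disjoint_iff_inter_eq_empty]
  simpa [apply_ite] using
    congrArg (Int.cast : ℤ → R) (Finset.sum_powerset_neg_one_pow_card (x := B ∩ L))

variable {n : ℕ}

def Far (i j : Fin (n - 1)) : Prop := (i : ℕ) + 2 ≤ j ∨ (j : ℕ) + 2 ≤ i

def Adj (i j : Fin (n - 1)) : Prop := (i : ℕ) + 1 = j ∨ (j : ℕ) + 1 = i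

section Index

variable {i j k : Fin (n - 1)}

lemma Far.symm (h : Far i j) : Far j i := Or.symm h

lemma Adj.symm (h : Adj i j) : Adj j i := Or.symm h

lemma Far.ne (h : Far i j) : i ≠ j := by
  rintro rfl; unfold Far at h; omega

lemma Adj.ne (h : Adj i j) : i ≠ j := by
  rintro rfl; unfold Adj at h; omega

lemma Adj.not_far (h : Adj i j) : ¬ Far i j := by
  unfold Adj at h; unfold Far; omega

lemma eq_or_adj_or_far (i j : Fin (n - 1)) : i = j ∨ Adj i j ∨ Far i j := by
  unfold Adj Far; rw [Fin.ext_iff]; omega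

lemma Adj.not_adj_of_adj (hik : Adj i k) (hkj : Adj k j) : ¬ Adj i j := by
  unfold Adj at *; omega

end Index

section Relations

variable {i j : Fin (n - 1)}

lemma gen_mul_gen_mul_of_far (h : Far i j) (x : BraidMonoid n) :
    gen i * (gen j * x) = gen j * (gen i * x) := by
  have hrel : gen i * gen j = (gen j * gen i : BraidMonoid n) := by
    rcases h with h | h
    · exact (Con.eq _).2 (ConGen.Rel.of _ _ (BraidRel.comm i j h))
    · exact ((Con.eq _).2 (ConGen.Rel.of _ _ (BraidRel.comm j i h))).symm
  rw [← mul_assoc, hrel, mul_assoc]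

lemma gen_mul_gen_mul_gen_mul_of_adj (h : Adj i j) (x : BraidMonoid n) :
    gen i * (gen j * (gen i * x)) = gen j * (gen i * (gen j * x)) := by
  have hrel : gen i * gen j * gen i = (gen j * gen i * gen j : BraidMonoid n) := by
    rcases h with h | h
    · exact (Con.eq _).2 (ConGen.Rel.of _ _ (BraidRel.braid i j h))
    · exact ((Con.eq _).2 (ConGen.Rel.of _ _ (BraidRel.braid j i h))).symm
  simp only [← mul_assoc, hrel]

end Relations

def ofWord (u : List (Fin (n - 1))) : BraidMonoid n := (u.map gen).prod

@[simp] lemma ofWord_nil : ofWord ([] : List (Fin (n - 1))) = 1 := rfl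

@[simp] lemma ofWord_cons (i : Fin (n - 1)) (u : List (Fin (n - 1))) :
    ofWord (i :: u) = gen i * ofWord u := List.prod_cons

@[simp] lemma ofWord_append (u v : List (Fin (n - 1))) :
    ofWord (u ++ v) = ofWord u * ofWord v := by
  simp [ofWord]

lemma mk'_ofList (u : List (Fin (n - 1))) :
    (conGen (BraidRel n)).mk' (FreeMonoid.ofList u) = ofWord u := by
  induction u with
  | nil => rfl
  | cons i u ih => rw [FreeMonoid.ofList_cons, map_mul, ih, ofWord_cons]; rfl

lemma exists_ofWord_eq (x : BraidMonoid n) : ∃ u, ofWord u = x := by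
  obtain ⟨w, rfl⟩ := (conGen (BraidRel n)).mk'_surjective x
  exact ⟨w.toList, by rw [← mk'_ofList, FreeMonoid.ofList_toList]⟩

lemma exists_eq_mul_gen_of_ne_one {x : BraidMonoid n} (hx : x ≠ 1) :
    ∃ y i, x = y * gen i := by
  obtain ⟨u, rfl⟩ := exists_ofWord_eq x
  rcases List.eq_nil_or_concat u with rfl | ⟨u, i, rfl⟩
  · exact absurd rfl hx
  · exact ⟨ofWord u, i, by simp⟩

def lengthHom : BraidMonoid n →* Multiplicative ℕ :=
  (conGen (BraidRel n)).lift (FreeMonoid.lift fun _ => Multiplicative.ofAdd 1) <|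
    Con.conGen_le.2 fun _ _ h => by cases h <;> simp [Con.ker_rel, mul_comm]

def length (x : BraidMonoid n) : ℕ := (lengthHom x).toAdd

@[simp] lemma length_mul (x y : BraidMonoid n) : length (x * y) = length x + length y := by
  simp [length]

@[simp] lemma length_gen (i : Fin (n - 1)) : length (gen i) = 1 := rfl

@[simp] lemma length_one : length (1 : BraidMonoid n) = 0 := by
  simp [length]

lemma mul_gen_ne_one (x : BraidMonoid n) (i : Fin (n - 1)) : x * gen i ≠ 1 := by
  intro h
  simpa using congrArg length h

inductive BraidStep (n : ℕ) : List (Fin (n - 1)) → List (Fin (n - 1)) → Prop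
  | comm {i j : Fin (n - 1)} (h : Far i j) (t : List (Fin (n - 1))) :
      BraidStep n (i :: j :: t) (j :: i :: t)
  | braid {i j : Fin (n - 1)} (h : Adj i j) (t : List (Fin (n - 1))) :
      BraidStep n (i :: j :: i :: t) (j :: i :: j :: t)
  | cons (k : Fin (n - 1)) {u v : List (Fin (n - 1))} :
      BraidStep n u v → BraidStep n (k :: u) (k :: v)

namespace BraidStep

variable {u v : List (Fin (n - 1))}

lemma symm (h : BraidStep n u v) : BraidStep n v u := by
  induction h with
  | comm h t => exact comm h.symm t
  | braid h t => exact braid h.symm t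
  | cons k _ ih => exact cons k ih

lemma append_left (l : List (Fin (n - 1))) (h : BraidStep n u v) :
    BraidStep n (l ++ u) (l ++ v) := by
  induction l with
  | nil => exact h
  | cons k l ih => exact cons k ih

lemma append_right (h : BraidStep n u v) (t : List (Fin (n - 1))) :
    BraidStep n (u ++ t) (v ++ t) := by
  induction h with
  | comm h s => exact comm h (s ++ t)
  | braid h s => exact braid h (s ++ t)
  | cons k _ ih => exact cons k ih

lemma ofWord_eq (h : BraidStep n u v) : ofWord u = ofWord v := by
  induction h with
  | comm h t => simpa using gen_mul_gen_mul_of_far h _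
  | braid h t => simpa using gen_mul_gen_mul_gen_mul_of_adj h _
  | cons k _ ih => rw [ofWord_cons, ofWord_cons, ih]

end BraidStep

instance : Std.Symm (BraidStep n) := ⟨fun _ _ h => h.symm⟩

def braidStepCon (n : ℕ) : Con (FreeMonoid (Fin (n - 1))) where
  r a b := Relation.ReflTransGen (BraidStep n) a.toList b.toList
  iseqv := ⟨fun _ => .refl, fun h => Relation.ReflTransGen.stdSymm.symm _ _ h, .trans⟩
  mul' {a b c d} h h' := by
    simp only [FreeMonoid.toList_mul]
    exact (Relation.ReflTransGen.lift (· ++ c.toList) (fun _ _ s => s.append_right _) _ _ h).trans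
      (Relation.ReflTransGen.lift (b.toList ++ ·) (fun _ _ s => s.append_left _) _ _ h')

lemma reflTransGen_braidStep_of_ofWord_eq {u v : List (Fin (n - 1))} (h : ofWord u = ofWord v) :
    Relation.ReflTransGen (BraidStep n) u v := by
  rw [← mk'_ofList, ← mk'_ofList] at h
  replace h := (Con.eq _).1 h
  have hle : conGen (BraidRel n) ≤ braidStepCon n := Con.conGen_le.2 fun _ _ r => by
    cases r with
    | comm i j h => exact .single (.comm (.inl h) [])
    | braid i j h => exact .single (.braid (.inl h) [])
  simpa [braidStepCon] using hle h

/-- `gen i * complement i j` is the least common right multiple of `gen i` and `gen j`. -/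
noncomputable def complement (i j : Fin (n - 1)) : BraidMonoid n :=
  if i = j then 1 else if Adj i j then gen j * gen i else gen j

section Complement

variable {i j k : Fin (n - 1)} {x y : BraidMonoid n}

@[simp] lemma complement_self (i : Fin (n - 1)) : complement i i = (1 : BraidMonoid n) := by
  simp [complement]

lemma complement_of_adj (h : Adj i j) : complement i j = (gen j * gen i : BraidMonoid n) := by
  simp [complement, h.ne, h]

lemma complement_of_far (h : Far i j) : complement i j = (gen j : BraidMonoid n) := by
  have : ¬ Adj i j := fun h' => h'.not_far h
  simp [complement, h.ne, this]

lemma length_complement_comm (i j : Fin (n - 1)) :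
    length (complement i j : BraidMonoid n) = length (complement j i : BraidMonoid n) := by
  rcases eq_or_adj_or_far i j with rfl | h | h
  · rfl
  · simp [complement_of_adj h, complement_of_adj h.symm]
  · simp [complement_of_far h, complement_of_far h.symm]

lemma gen_mul_complement_of_far (hi : Far k i) (hj : Far k j) (x : BraidMonoid n) :
    gen k * (complement i j * x) = complement i j * (gen k * x) := by
  rcases eq_or_adj_or_far i j with rfl | h | h
  · simp
  · simp only [complement_of_adj h, mul_assoc, gen_mul_gen_mul_of_far hj,
      gen_mul_gen_mul_of_far hi]
  · simp only [complement_of_far h, gen_mul_gen_mul_of_far hj]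

/-- `gen i * x = gen j * y` factors through the lcm of `gen i` and `gen j`. -/
def Complemented (i j : Fin (n - 1)) (x y : BraidMonoid n) : Prop :=
  ∃ c, x = complement i j * c ∧ y = complement j i * c

lemma Complemented.symm (h : Complemented i j x y) : Complemented j i y x :=
  let ⟨c, hx, hy⟩ := h
  ⟨c, hy, hx⟩

lemma Complemented.length_eq (h : Complemented i j x y) : length x = length y := by
  obtain ⟨c, rfl, rfl⟩ := h
  simp [length_complement_comm i j]

lemma complemented_self_iff : Complemented i i x y ↔ x = y := by
  simp [Complemented, eq_comm]

lemma complemented_iff_of_adj (h : Adj i j) :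
    Complemented i j x y ↔ ∃ c, x = gen j * (gen i * c) ∧ y = gen i * (gen j * c) := by
  simp [Complemented, complement_of_adj h, complement_of_adj h.symm, mul_assoc]

lemma complemented_iff_of_far (h : Far i j) :
    Complemented i j x y ↔ ∃ c, x = gen j * c ∧ y = gen i * c := by
  simp [Complemented, complement_of_far h, complement_of_far h.symm]

lemma BraidStep.exists_complemented {u w : List (Fin (n - 1))} (h : BraidStep n (i :: u) w) :
    ∃ k u', w = k :: u' ∧ Complemented i k (ofWord u) (ofWord u') := by
  cases h with
  | comm h t =>
    exact ⟨_, _, rfl, (complemented_iff_of_far h).2 ⟨ofWord t, by simp, by simp⟩⟩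
  | braid h t =>
    exact ⟨_, _, rfl, (complemented_iff_of_adj h).2 ⟨ofWord t, by simp, by simp⟩⟩
  | cons k h => exact ⟨_, _, rfl, complemented_self_iff.2 h.ofWord_eq⟩

end Complement

def ComplementedBelow (n m : ℕ) : Prop :=
  ∀ ⦃i j : Fin (n - 1)⦄ ⦃x y : BraidMonoid n⦄,
    length x < m → gen i * x = gen j * y → Complemented i j x y

namespace ComplementedBelow

variable {m : ℕ} {i j k : Fin (n - 1)} {x x' y e d : BraidMonoid n}

lemma left_cancel (IH : ComplementedBelow n m) (hx : length x < m)
    (h : gen i * x = gen i * y) : x = y :=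
  complemented_self_iff.1 (IH hx h)

lemma far_far (IH : ComplementedBelow n m) (hik : Far i k) (hjk : Far j k)
    (hm : length (gen k * e) ≤ m) (h : gen i * e = gen j * d) :
    Complemented i j (gen k * e) (gen k * d) := by
  obtain ⟨c, rfl, rfl⟩ := IH (by simp at hm; omega) h
  exact ⟨gen k * c, gen_mul_complement_of_far hik.symm hjk.symm c,
    gen_mul_complement_of_far hjk.symm hik.symm c⟩

lemma far_adj (IH : ComplementedBelow n m) (hik : Far i k) (hkj : Adj k j)
    (hm : length (gen k * e) ≤ m) (h : gen i * e = gen j * (gen k * d)) :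
    Complemented i j (gen k * e) (gen k * (gen j * d)) := by
  have hlen := congrArg length h
  simp only [length_mul, length_gen] at hm hlen
  rcases eq_or_adj_or_far i j with rfl | hij | hij
  · exact absurd hik (hkj.symm.not_far)
  · obtain ⟨f, rfl, hf⟩ := (complemented_iff_of_adj hij).1 (IH (by omega) h)
    obtain ⟨u, rfl, hu⟩ := (complemented_iff_of_far hik.symm).1 (IH (by omega) hf)
    simp only [length_mul, length_gen] at hm
    obtain ⟨w, rfl, rfl⟩ := (complemented_iff_of_adj hkj.symm).1 (IH (by omega) hu)
    refine (complemented_iff_of_adj hij).2 ⟨gen k * (gen j * (gen i * w)), ?_, ?_⟩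
    · conv_lhs => rw [gen_mul_gen_mul_of_far hik, gen_mul_gen_mul_gen_mul_of_adj hkj,
        gen_mul_gen_mul_gen_mul_of_adj hij.symm, gen_mul_gen_mul_of_far hik.symm]
    · conv_lhs => rw [gen_mul_gen_mul_gen_mul_of_adj hij.symm, gen_mul_gen_mul_of_far hik.symm,
        gen_mul_gen_mul_of_far hik w, gen_mul_gen_mul_gen_mul_of_adj hkj]
  · obtain ⟨f, rfl, hf⟩ := (complemented_iff_of_far hij).1 (IH (by omega) h)
    obtain ⟨u, rfl, rfl⟩ := (complemented_iff_of_far hik.symm).1 (IH (by omega) hf)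
    refine (complemented_iff_of_far hij).2 ⟨gen k * (gen j * u), ?_, ?_⟩
    · conv_lhs => rw [gen_mul_gen_mul_gen_mul_of_adj hkj]
    · conv_lhs => rw [gen_mul_gen_mul_of_far hij.symm, gen_mul_gen_mul_of_far hik.symm]

lemma adj_adj (IH : ComplementedBelow n m) (hik : Adj i k) (hkj : Adj k j)
    (hm : length (gen k * (gen i * e)) ≤ m) (h : gen i * (gen k * e) = gen j * (gen k * d)) :
    Complemented i j (gen k * (gen i * e)) (gen k * (gen j * d)) := by
  have hlen := congrArg length h
  simp only [length_mul, length_gen] at hm hlen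
  rcases eq_or_adj_or_far i j with rfl | hij | hij
  · have hked : gen k * e = gen k * d := IH.left_cancel (by simp; omega) h
    rw [IH.left_cancel (by omega) hked]
    exact complemented_self_iff.2 rfl
  · exact absurd hij (hik.not_adj_of_adj hkj)
  · obtain ⟨f, hf₁, hf₂⟩ := (complemented_iff_of_far hij).1 (IH (by simp; omega) h)
    obtain ⟨u, rfl, rfl⟩ := (complemented_iff_of_adj hkj).1 (IH (by omega) hf₁)
    obtain ⟨v, rfl, hv⟩ := (complemented_iff_of_adj hik.symm).1 (IH (by omega) hf₂)
    simp only [length_mul, length_gen] at hm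
    obtain ⟨w, rfl, rfl⟩ :=
      (complemented_iff_of_far hij.symm).1 (IH (by omega) (IH.left_cancel (by simp; omega) hv))
    refine (complemented_iff_of_far hij).2 ⟨gen k * (gen j * (gen i * (gen k * w))), ?_, ?_⟩
    · conv_lhs => rw [gen_mul_gen_mul_of_far hij, gen_mul_gen_mul_gen_mul_of_adj hik,
        gen_mul_gen_mul_gen_mul_of_adj hkj]
    · conv_lhs => rw [gen_mul_gen_mul_of_far hij.symm, gen_mul_gen_mul_gen_mul_of_adj hkj.symm,
        gen_mul_gen_mul_gen_mul_of_adj hik.symm, gen_mul_gen_mul_of_far hij]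

lemma trans (IH : ComplementedBelow n m) (hm : length x ≤ m)
    (h₁ : Complemented i k x x') (h₂ : Complemented k j x' y) : Complemented i j x y := by
  obtain ⟨e, rfl, rfl⟩ := h₁
  obtain ⟨d, h, rfl⟩ := h₂
  obtain rfl | hik := eq_or_ne i k
  · rw [complement_self, one_mul] at h ⊢
    exact ⟨d, h, rfl⟩
  obtain rfl | hkj := eq_or_ne k j
  · rw [complement_self, one_mul] at h ⊢
    exact ⟨e, rfl, h.symm⟩
  rcases (eq_or_adj_or_far i k).resolve_left hik with hik | hik <;>
  rcases (eq_or_adj_or_far k j).resolve_left hkj with hkj | hkj <;>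
  simp only [complement_of_adj, complement_of_far, hik, hik.symm, hkj, hkj.symm,
    mul_assoc] at h hm ⊢
  · exact IH.adj_adj hik hkj hm h
  · have hlen := congrArg length h
    simp only [length_mul, length_gen] at hm hlen
    exact (IH.far_adj hkj.symm hik.symm (by simp; omega) h.symm).symm
  · exact IH.far_adj hik hkj hm h
  · exact IH.far_far hik hkj.symm hm h

end ComplementedBelow

lemma complementedBelow (n m : ℕ) : ComplementedBelow n m := by
  induction m with
  | zero => intro _ _ _ _ hx; omega
  | succ m IH =>
    intro i j x y hx h
    obtain ⟨u, rfl⟩ := exists_ofWord_eq x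
    obtain ⟨v, rfl⟩ := exists_ofWord_eq y
    have hsteps : Relation.ReflTransGen (BraidStep n) (i :: u) (j :: v) :=
      reflTransGen_braidStep_of_ofWord_eq (by simpa using h)
    suffices ∀ w, Relation.ReflTransGen (BraidStep n) w (j :: v) → ∀ i u, w = i :: u →
        length (ofWord u) ≤ m → Complemented i j (ofWord u) (ofWord v) from
      this _ hsteps i u rfl (by omega)
    intro w hw
    induction hw using Relation.ReflTransGen.head_induction_on with
    | refl =>
      rintro i u ⟨⟩ -
      exact complemented_self_iff.2 rfl
    | head hstep _ ih =>
      rintro i u rfl hu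
      obtain ⟨k, u', rfl, hc⟩ := hstep.exists_complemented
      exact IH.trans hu hc (ih k u' rfl (hc.length_eq ▸ hu))

/-- **Garside's key lemma**. -/
theorem complemented_of_gen_mul_eq {i j : Fin (n - 1)} {x y : BraidMonoid n}
    (h : gen i * x = gen j * y) : Complemented i j x y :=
  complementedBelow n (length x + 1) (Nat.lt_succ_self _) h

instance : IsLeftCancelMul (BraidMonoid n) where
  mul_left_cancel a x y h := by
    obtain ⟨u, rfl⟩ := exists_ofWord_eq a
    induction u with
    | nil => simpa using h
    | cons i u ih =>
      simp only [ofWord_cons, mul_assoc] at h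
      exact ih (complemented_self_iff.1 (complemented_of_gen_mul_eq h))

def reverse : BraidMonoid n →* (BraidMonoid n)ᵐᵒᵖ :=
  (conGen (BraidRel n)).lift (FreeMonoid.lift fun i => MulOpposite.op (gen i)) <|
    Con.conGen_le.2 fun _ _ r => by
      rw [Con.ker_rel]
      cases r with
      | comm i j h =>
        simpa [← MulOpposite.op_mul] using (gen_mul_gen_mul_of_far (.inl h) 1).symm
      | braid i j h =>
        simpa [← MulOpposite.op_mul, mul_assoc] using
          gen_mul_gen_mul_gen_mul_of_adj (.inl h) 1

lemma reverse_ofWord (u : List (Fin (n - 1))) :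
    reverse (ofWord u) = MulOpposite.op (ofWord u.reverse) := by
  induction u with
  | nil => simp
  | cons i u ih =>
    rw [ofWord_cons, map_mul, ih, List.reverse_cons, ofWord_append, MulOpposite.op_mul]
    simp only [ofWord_cons, ofWord_nil, mul_one]
    rfl

lemma reverse_injective : Function.Injective (reverse : BraidMonoid n → _) := by
  intro x y h
  obtain ⟨u, rfl⟩ := exists_ofWord_eq x
  obtain ⟨v, rfl⟩ := exists_ofWord_eq y
  rw [reverse_ofWord, reverse_ofWord, MulOpposite.op_inj] at h
  simpa [reverse_ofWord] using congrArg reverse h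

instance : IsRightCancelMul (BraidMonoid n) where
  mul_right_cancel z x y h := by
    apply reverse_injective
    apply MulOpposite.unop_injective
    have := congrArg (fun w => (reverse w).unop) h
    simp only [map_mul, MulOpposite.unop_mul] at this
    exact mul_left_cancel this

def IsLeftLcm (X : Finset (Fin (n - 1))) (d : BraidMonoid n) : Prop :=
  (∀ i ∈ X, gen i ∣ d) ∧ ∀ z, (∀ i ∈ X, gen i ∣ z) → d ∣ z

def IsRightLcm (X : Finset (Fin (n - 1))) (d : BraidMonoid n) : Prop :=
  (∀ i ∈ X, gen i ∣ᵣ d) ∧ ∀ z, (∀ i ∈ X, gen i ∣ᵣ z) → d ∣ᵣ z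

/-- `L(y)`, as a finset. -/
noncomputable def divisorGens (y : BraidMonoid n) : Finset (Fin (n - 1)) :=
  Finset.univ.filter fun i => gen i ∣ y

/-- `Σ \ R(x)`, as a finset. -/
noncomputable def extensions (x : BraidMonoid n) : Finset (Fin (n - 1)) :=
  Finset.univ.filter fun i => x * gen i ∈ Simples n

section Simples

variable {X : Finset (Fin (n - 1))} {d x y z : BraidMonoid n}

lemma IsLeftLcm.dvd_iff_subset (h : IsLeftLcm X d) : d ∣ y ↔ X ⊆ divisorGens y := by
  simp only [Finset.subset_iff, divisorGens, Finset.mem_filter, Finset.mem_univ, true_and]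
  exact ⟨fun hd i hi => (h.1 i hi).trans hd, h.2 y⟩

lemma mem_simples_of_dvd (hy : y ∈ Simples n) (h : x ∣ y) : x ∈ Simples n :=
  h.trans hy

lemma mul_mem_simples_iff {c : BraidMonoid n} (hc : garside n = x * c) :
    x * y ∈ Simples n ↔ y ∣ c := by
  change x * y ∣ garside n ↔ _
  rw [hc]
  exact (IsLeftRegular.all x).dvd_cancel_left

lemma IsLeftLcm.mul_mem_simples_iff_subset (h : IsLeftLcm X d) (hx : x ∈ Simples n) :
    x * d ∈ Simples n ↔ X ⊆ extensions x := by
  obtain ⟨c, hc⟩ := hx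
  simp only [Finset.subset_iff, extensions, Finset.mem_filter, Finset.mem_univ, true_and,
    mul_mem_simples_iff hc]
  exact ⟨fun hd i hi => (h.1 i hi).trans hd, h.2 c⟩

lemma lcm_mem_simples {Δhat : Finset (Fin (n - 1)) → BraidMonoid n}
    (hl : ∀ X, IsLeftLcm X (Δhat X)) (hΔ : Δhat Finset.univ = garside n) (X) :
    Δhat X ∈ Simples n :=
  (hl X).2 _ fun i _ => hΔ ▸ (hl Finset.univ).1 i (Finset.mem_univ i)

lemma filter_mul_lcm_mem_simples {Δhat : Finset (Fin (n - 1)) → BraidMonoid n}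
    (hl : ∀ X, IsLeftLcm X (Δhat X)) {x : BraidMonoid n} (hx : x ∈ Simples n) :
    Finset.univ.filter (fun X => x * Δhat X ∈ Simples n) = (extensions x).powerset := by
  ext X
  simp [(hl X).mul_mem_simples_iff_subset hx]

lemma arrow_iff_disjoint : Arrow x y ↔ Disjoint (extensions x) (divisorGens y) := by
  simp only [Arrow, Lset, Rset, Set.subset_def, Set.mem_ofPred_eq, Finset.disjoint_left,
    extensions, divisorGens, Finset.mem_filter, Finset.mem_univ, true_and]
  exact ⟨fun h i hx hy => h i hy hx, fun h i hy hx => h hx hy⟩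

end Simples

section Mobius

variable {R : Type*} [CommRing R] {Δhat : Finset (Fin (n - 1)) → BraidMonoid n}

lemma ite_arrow_eq_sum (hl : ∀ X, IsLeftLcm X (Δhat X)) (x y : BraidMonoid n) (a : R) :
    (if Arrow x y then a else 0) =
      ∑ X ∈ (extensions x).powerset, (-1 : R) ^ X.card * if Δhat X ∣ y then a else 0 := by
  rw [if_congr arrow_iff_disjoint rfl rfl, ← boole_mul, ← sum_powerset_ite_subset_neg_one_pow,
    Finset.sum_mul]
  refine Finset.sum_congr rfl fun X _ => ?_
  rw [(hl X).dvd_iff_subset]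
  split_ifs <;> simp

noncomputable def lastGens (z w : BraidMonoid n) : Finset (Fin (n - 1)) :=
  Finset.univ.filter fun i => ∃ y, z ∣ y ∧ y * gen i = w

lemma exists_mul_lcm_eq_iff_subset {X : Finset (Fin (n - 1))} {d z w : BraidMonoid n}
    (hX : IsRightLcm X d) (hzw : z ∣ w) :
    (∃ y, z ∣ y ∧ y * d = w) ↔ X ⊆ lastGens z w := by
  simp only [Finset.subset_iff, lastGens, Finset.mem_filter, Finset.mem_univ, true_and]
  constructor
  · rintro ⟨y, hzy, rfl⟩ i hi
    obtain ⟨u, rfl⟩ := hX.1 i hi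
    exact ⟨y * u, dvd_mul_of_dvd_left hzy u, mul_assoc _ _ _⟩
  · intro h
    obtain ⟨t, rfl⟩ := hzw
    have ht : ∀ i ∈ X, gen i ∣ᵣ t := fun i hi => by
      obtain ⟨_, ⟨s, rfl⟩, hs⟩ := h hi
      exact ⟨s, mul_left_cancel (hs.symm.trans (mul_assoc _ _ _))⟩
    obtain ⟨s, rfl⟩ := hX.2 t ht
    exact ⟨z * s, dvd_mul_right z s, mul_assoc _ _ _⟩

lemma lastGens_eq_empty_iff {z w : BraidMonoid n} (hzw : z ∣ w) :
    lastGens z w = ∅ ↔ w = z := by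
  simp only [Finset.eq_empty_iff_forall_notMem, lastGens, Finset.mem_filter, Finset.mem_univ,
    true_and, not_exists, not_and]
  obtain ⟨t, rfl⟩ := hzw
  constructor
  · intro h
    by_contra ht
    obtain ⟨s, i, rfl⟩ := exists_eq_mul_gen_of_ne_one (x := t) (by rintro rfl; simp at ht)
    exact h i (z * s) (dvd_mul_right z s) (mul_assoc _ _ _)
  · rintro hz i _ ⟨s, rfl⟩ hs
    apply mul_gen_ne_one s i
    apply mul_left_cancel (a := z)
    rw [mul_one, ← mul_assoc, hs, hz]

lemma sum_ite_exists_mul_lcm_eq (hr : ∀ X, IsRightLcm X (Δhat X)) (z w : BraidMonoid n) :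
    ∑ X, (if ∃ y, z ∣ y ∧ y * Δhat X = w then (-1 : R) ^ X.card else 0) =
      if w = z then 1 else 0 := by
  by_cases hzw : z ∣ w
  · have hsum := sum_powerset_ite_subset_neg_one_pow (R := R) Finset.univ (lastGens z w)
    simp only [Finset.powerset_univ, Finset.disjoint_iff_inter_eq_empty, Finset.univ_inter,
      lastGens_eq_empty_iff hzw] at hsum
    rw [← hsum]
    exact Finset.sum_congr rfl fun X _ => if_congr (exists_mul_lcm_eq_iff_subset (hr X) hzw) rfl rfl
  · have hw : w ≠ z := by rintro rfl; exact hzw dvd_rfl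
    have hX : ∀ X, ¬ ∃ y, z ∣ y ∧ y * Δhat X = w :=
      fun X ⟨y, hzy, hy⟩ => hzw (hzy.trans ⟨Δhat X, hy.symm⟩)
    simp [hX, hw]

lemma sum_simples_ite_mul_right (hS : (Simples n).Finite) (d : BraidMonoid n)
    (P : BraidMonoid n → Prop) (g : BraidMonoid n → R) :
    ∑ y ∈ hS.toFinset, (if P y ∧ y * d ∈ Simples n then g (y * d) else 0) =
      ∑ w ∈ hS.toFinset, if ∃ y, P y ∧ y * d = w then g w else 0 := by
  rw [← Finset.sum_filter, ← Finset.sum_filter]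
  refine Finset.sum_nbij (· * d) ?_ (fun y _ y' _ h => mul_right_cancel h) ?_ fun _ _ => rfl
  · intro y hy
    simp only [Finset.mem_filter, Set.Finite.mem_toFinset] at hy ⊢
    exact ⟨hy.2.2, y, hy.2.1, rfl⟩
  · rintro w hw
    simp only [Finset.coe_filter, Set.Finite.mem_toFinset, Set.mem_ofPred_eq] at hw
    obtain ⟨hw, y, hy, rfl⟩ := hw
    refine ⟨y, ?_, rfl⟩
    simp only [Finset.coe_filter, Set.Finite.mem_toFinset, Set.mem_ofPred_eq]
    exact ⟨mem_simples_of_dvd hw ⟨d, rfl⟩, hy, hw⟩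

/-- Möbius inversion on the simple braids. -/
theorem sum_dvd_eq_of_mobius (hS : (Simples n).Finite) (hr : ∀ X, IsRightLcm X (Δhat X))
    {f h : BraidMonoid n → R}
    (hh : ∀ y, h y = ∑ X,
      if y * Δhat X ∈ Simples n then (-1) ^ X.card * f (y * Δhat X) else 0)
    {z : BraidMonoid n} (hz : z ∈ Simples n) :
    ∑ y ∈ hS.toFinset, (if z ∣ y then h y else 0) = f z := by
  calc ∑ y ∈ hS.toFinset, (if z ∣ y then h y else 0)
      = ∑ X, ∑ y ∈ hS.toFinset, if z ∣ y ∧ y * Δhat X ∈ Simples n then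
          (-1) ^ X.card * f (y * Δhat X) else 0 := by
        rw [Finset.sum_comm]
        refine Finset.sum_congr rfl fun y _ => ?_
        split_ifs with hzy <;> simp [hh, hzy]
    _ = ∑ X, ∑ w ∈ hS.toFinset, if ∃ y, z ∣ y ∧ y * Δhat X = w then
          (-1) ^ X.card * f w else 0 :=
        Finset.sum_congr rfl fun X _ =>
          sum_simples_ite_mul_right hS (Δhat X) (z ∣ ·) fun w => (-1) ^ X.card * f w
    _ = ∑ w ∈ hS.toFinset, f w * ∑ X, if ∃ y, z ∣ y ∧ y * Δhat X = w then
          (-1 : R) ^ X.card else 0 := by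
        rw [Finset.sum_comm]
        simp only [Finset.mul_sum, mul_ite, mul_zero, mul_comm]
    _ = f z := by
        simp [sum_ite_exists_mul_lcm_eq hr, hS.mem_toFinset.2 hz]

end Mobius

theorem mobius_transform_factorization_general (n : ℕ)
    (len : BraidMonoid n → ℕ)
    (hlen_mul : ∀ x y : BraidMonoid n, len (x * y) = len x + len y)
    (Δhat : Finset (Fin (n - 1)) → BraidMonoid n)
    (hlub_l : ∀ X : Finset (Fin (n - 1)),
      (∀ i ∈ X, ldvd (gen i) (Δhat X)) ∧
        ∀ z : BraidMonoid n, (∀ i ∈ X, ldvd (gen i) z) → ldvd (Δhat X) z)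
    (hlub_r : ∀ X : Finset (Fin (n - 1)),
      (∀ i ∈ X, rdvd (gen i) (Δhat X)) ∧
        ∀ z : BraidMonoid n, (∀ i ∈ X, rdvd (gen i) z) → rdvd (Δhat X) z)
    (hΔ : Δhat Finset.univ = garside n)
    (hS : (Simples n).Finite)
    (p : ℝ) (h g : BraidMonoid n → ℝ)
    (hdef : ∀ x : BraidMonoid n, h x = ∑ X : Finset (Fin (n - 1)),
        if x * Δhat X ∈ Simples n then (-1 : ℝ) ^ X.card * p ^ len (x * Δhat X) else 0)
    (gdef : ∀ x : BraidMonoid n, g x = ∑ y ∈ hS.toFinset, if Arrow x y then h y else 0) :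
    ∀ x ∈ Simples n, h x = p ^ len x * g x := by
  intro x hx
  have hinv (X : Finset (Fin (n - 1))) :
      ∑ y ∈ hS.toFinset, (if Δhat X ∣ y then h y else 0) = p ^ len (Δhat X) :=
    sum_dvd_eq_of_mobius hS hlub_r (f := fun w => p ^ len w) hdef (lcm_mem_simples hlub_l hΔ X)
  calc h x = ∑ X ∈ (extensions x).powerset, (-1) ^ X.card * p ^ len (x * Δhat X) := by
        rw [hdef, ← Finset.sum_filter, filter_mul_lcm_mem_simples hlub_l hx]
    _ = p ^ len x * ∑ X ∈ (extensions x).powerset, (-1) ^ X.card * p ^ len (Δhat X) := by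
        simp only [hlen_mul, pow_add, Finset.mul_sum, mul_left_comm]
    _ = p ^ len x * g x := by
        simp only [gdef, ite_arrow_eq_sum hlub_l x, Finset.mul_sum]
        rw [Finset.sum_comm]
        simp only [← Finset.mul_sum, hinv]

/-- If `h` is the Möbius transform of `x ↦ p^{ℓ(x)}` on simple
braids and `g(x) = Σ_{y ∈ S, x → y} h(y)`, then `h(x) = p^{ℓ(x)}·g(x)` on `S`. -/
theorem mobius_transform_factorization (n : ℕ) (hn : 2 ≤ n)
    (len : BraidMonoid n → ℕ)
    (hlen_mul : ∀ x y : BraidMonoid n, len (x * y) = len x + len y)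
    (hlen_gen : ∀ i : Fin (n - 1), len (gen i) = 1)
    (Δhat : Finset (Fin (n - 1)) → BraidMonoid n)
    (hlub_l : ∀ X : Finset (Fin (n - 1)),
      (∀ i ∈ X, ldvd (gen i) (Δhat X)) ∧
        ∀ z : BraidMonoid n, (∀ i ∈ X, ldvd (gen i) z) → ldvd (Δhat X) z)
    (hlub_r : ∀ X : Finset (Fin (n - 1)),
      (∀ i ∈ X, rdvd (gen i) (Δhat X)) ∧
        ∀ z : BraidMonoid n, (∀ i ∈ X, rdvd (gen i) z) → rdvd (Δhat X) z)
    (hΔ : Δhat Finset.univ = garside n)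
    (hS : (Simples n).Finite)
    (p : ℝ) (h g : BraidMonoid n → ℝ)
    (hdef : ∀ x : BraidMonoid n, h x = ∑ X : Finset (Fin (n - 1)),
        if x * Δhat X ∈ Simples n then (-1 : ℝ) ^ X.card * p ^ len (x * Δhat X) else 0)
    (gdef : ∀ x : BraidMonoid n, g x = ∑ y ∈ hS.toFinset, if Arrow x y then h y else 0) :
    ∀ x ∈ Simples n, h x = p ^ len x * g x :=
  mobius_transform_factorization_general n len hlen_mul Δhat hlub_l hlub_r hΔ hS p h g hdef gdef

end BraidMeasure
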